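/- arXiv:2601.10670 — 3 statements merged into one kernel-verified Lean document; each statement's English description precedes it below -/
import Mathlib

section
/- Let ℓ ≥ 1. Every real element of GL₂(𝔬_ℓ) is strongly real; that is, if A ∈ GL₂(𝔬_ℓ) is conjugate in GL₂(𝔬_ℓ) to A⁻¹, then there exists h ∈ GL₂(𝔬_ℓ) with h² = 1 and h A h⁻¹ = A⁻¹. -/
/-!
Since `2` is invertible, a real `A` has `det A = ±1`. If `det A = -1`, then `A⁻¹ = -adj A` has
trace `-tr A`, so `tr A = 0` and Cayley–Hamilton gives `A² = 1`. If `det A = 1`, then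
`A⁻¹ = adj A`, and the involution `H = !![x, y; z, -x]` (where `x² + yz = 1`) satisfies
`H A H = adj A` as soon as `(a - d) x + b z + c y = 0`. This plane meets the quadric already over
`O`: if `b` or `c` divides `a - d` there is an obvious point; otherwise `b = (a - d) b'` and
`c = (a - d) c'` with `b', c' ∈ 𝔪`, and `(-(b' + c') t, t, t)` works once `t⁻² = 1 + (b' + c')²`,
a square by Hensel's lemma in the complete ring `O`.
-/

open Matrix IsLocalRing Polynomial

def IsStronglyReal {G : Type*} [Group G] (g : G) : Prop :=
  ∃ h : G, h ^ 2 = 1 ∧ h * g * h⁻¹ = g⁻¹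

theorem HenselianRing.isSquare_of_sub_one_mem {R : Type*} [CommRing R] {I : Ideal R}
    [HenselianRing R I] (h2 : IsUnit (2 : R)) {u : R} (hu : u - 1 ∈ I) : IsSquare u := by
  obtain ⟨a, ha, -⟩ := HenselianRing.is_henselian (X ^ 2 - C u)
    (monic_X_pow_sub_C u two_ne_zero) 1 (by simpa using I.neg_mem hu)
    (by simpa [one_add_one_eq_two] using h2.map (Ideal.Quotient.mk I))
  exact ⟨a, by simpa [sq, sub_eq_zero, eq_comm] using ha⟩

theorem exists_sq_add_mul_eq_one_and_linear_eq_zero {O : Type*} [CommRing O] [IsDomain O]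
    [ValuationRing O] [HenselianRing O (maximalIdeal O)] (h2 : IsUnit (2 : O)) (a b c : O) :
    ∃ x y z : O, x ^ 2 + y * z = 1 ∧ a * x + b * z + c * y = 0 := by
  by_cases hb : b ∣ a
  · obtain ⟨a', rfl⟩ := hb
    exact ⟨1, 0, -a', by ring, by ring⟩
  by_cases hc : c ∣ a
  · obtain ⟨a', rfl⟩ := hc
    exact ⟨1, -a', 0, by ring, by ring⟩
  obtain ⟨b', rfl⟩ := (ValuationRing.dvd_total b a).resolve_left hb
  obtain ⟨c', rfl⟩ := (ValuationRing.dvd_total c a).resolve_left hc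
  have hb' : b' ∈ maximalIdeal O := fun hu => hb (hu.mul_right_dvd.mpr dvd_rfl)
  have hc' : c' ∈ maximalIdeal O := fun hu => hc (hu.mul_right_dvd.mpr dvd_rfl)
  have hsq : (b' + c') ^ 2 ∈ maximalIdeal O := Ideal.pow_mem_of_mem _ (add_mem hb' hc') 2 two_pos
  obtain ⟨w, hw⟩ := HenselianRing.isSquare_of_sub_one_mem h2 (u := (b' + c') ^ 2 + 1)
    (by rwa [add_sub_cancel_right])
  have hw_unit : IsUnit w := by
    refine isUnit_of_mul_isUnit_left (y := w) (hw ▸ ?_)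
    simpa [add_comm] using isUnit_one_sub_self_of_mem_nonunits _ (neg_mem hsq)
  obtain ⟨t, ht⟩ := hw_unit.exists_right_inv
  exact ⟨-(b' + c') * t, t, t, by linear_combination t ^ 2 * hw + (w * t + 1) * ht, by ring⟩

theorem Ideal.Quotient.eq_one_or_eq_neg_one_of_sq_eq_one {O : Type*} [CommRing O] [IsLocalRing O]
    (h2 : IsUnit (2 : O)) {I : Ideal O} {d : O ⧸ I} (hd : d ^ 2 = 1) : d = 1 ∨ d = -1 := by
  obtain ⟨D, rfl⟩ := Ideal.Quotient.mk_surjective d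
  have hmem : (D - 1) * (D + 1) ∈ I := by
    rw [← Ideal.Quotient.eq_zero_iff_mem, map_mul, map_sub, map_add, map_one]
    linear_combination hd
  rw [← map_one (Ideal.Quotient.mk I), ← map_neg, Ideal.Quotient.eq, Ideal.Quotient.eq,
    sub_neg_eq_add]
  refine (isUnit_or_isUnit_of_isUnit_add (a := D + 1) (b := -(D - 1)) (by ring_nf; exact h2)).imp
    (fun h => (I.mul_unit_mem_iff_mem h).mp hmem)
    (fun h => (I.mul_unit_mem_iff_mem (IsUnit.neg_iff _ |>.mp h)).mp (mul_comm (D - 1) _ ▸ hmem))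

theorem isUnit_two_of_odd_ringChar_residueField {R : Type*} [CommRing R] [IsLocalRing R]
    (hodd : Odd (ringChar (ResidueField R))) : IsUnit (2 : R) := by
  rw [← residue_ne_zero_iff_isUnit, map_ofNat]
  exact Ring.two_ne_zero fun h => Nat.not_odd_iff_even.mpr even_two (h ▸ hodd)

namespace Matrix

variable {R : Type*} [CommRing R]

theorem mul_self_eq_one_of_det_eq_neg_one_of_trace_eq_zero {M : Matrix (Fin 2) (Fin 2) R}
    (hdet : M.det = -1) (htr : M.trace = 0) : M * M = 1 := by
  rw [det_fin_two] at hdet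
  rw [trace_fin_two] at htr
  rw [M.eta_fin_two, mul_fin_two, one_fin_two]
  congr 1
  ext i j
  fin_cases i <;> fin_cases j <;> dsimp only [Fin.zero_eta, Fin.mk_one, cons_val_zero, cons_val_one]
  · linear_combination M 0 0 * htr - hdet
  · linear_combination M 0 1 * htr
  · linear_combination M 1 0 * htr
  · linear_combination M 1 1 * htr - hdet

theorem mul_mul_eq_adjugate_of_quadric {M : Matrix (Fin 2) (Fin 2) R} {x y z : R}
    (hq : x ^ 2 + y * z = 1) (hl : (M 0 0 - M 1 1) * x + M 0 1 * z + M 1 0 * y = 0) :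
    !![x, y; z, -x] * M * !![x, y; z, -x] = adjugate M := by
  rw [M.eta_fin_two, adjugate_fin_two_of, mul_fin_two, mul_fin_two]
  congr 1
  ext i j
  fin_cases i <;> fin_cases j <;> dsimp only [Fin.zero_eta, Fin.mk_one, cons_val_zero, cons_val_one]
  · linear_combination M 1 1 * hq + x * hl
  · linear_combination -M 0 1 * hq + y * hl
  · linear_combination -M 1 0 * hq + z * hl
  · linear_combination M 0 0 * hq - x * hl

theorem trace_adjugate_fin_two (M : Matrix (Fin 2) (Fin 2) R) : (adjugate M).trace = M.trace := by
  rw [adjugate_fin_two, trace_fin_two_of, trace_fin_two, add_comm]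

variable {n : Type*} [Fintype n] [DecidableEq n]

theorem det_sq_eq_one_of_isConj_inv {A : GL n R} (hA : IsConj A A⁻¹) :
    (A : Matrix n n R).det ^ 2 = 1 := by
  have h := isConj_iff_eq.mp (GeneralLinearGroup.det.map_isConj hA)
  rw [map_inv, eq_inv_iff_mul_eq_one, ← sq] at h
  simpa using congrArg Units.val h

theorem trace_eq_of_isConj {A B : GL n R} (h : IsConj A B) :
    (A : Matrix n n R).trace = (B : Matrix n n R).trace := by
  obtain ⟨c, rfl⟩ := isConj_iff.mp h
  exact (trace_units_conj c A).symm

theorem coe_inv_eq_det_smul_adjugate {A : GL n R} (h : (A : Matrix n n R).det ^ 2 = 1) :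
    ((A⁻¹ : GL n R) : Matrix n n R) = (A : Matrix n n R).det • adjugate (A : Matrix n n R) :=
  Units.inv_eq_of_mul_eq_one_right <| by
    rw [mul_smul_comm, mul_adjugate, smul_smul, ← sq, h, one_smul]

theorem inv_eq_self_of_isConj_inv_of_det_eq_neg_one (h2 : IsUnit (2 : R)) {A : GL (Fin 2) R}
    (hA : IsConj A A⁻¹) (hdet : (A : Matrix (Fin 2) (Fin 2) R).det = -1) : A⁻¹ = A := by
  have htr : (A : Matrix (Fin 2) (Fin 2) R).trace = 0 := by
    have h := trace_eq_of_isConj hA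
    rw [coe_inv_eq_det_smul_adjugate (by rw [hdet]; norm_num), hdet, neg_one_smul, trace_neg,
      trace_adjugate_fin_two, eq_neg_iff_add_eq_zero, ← two_mul] at h
    exact h2.mul_right_eq_zero.mp h
  exact inv_eq_of_mul_eq_one_right <| Units.ext <|
    mul_self_eq_one_of_det_eq_neg_one_of_trace_eq_zero hdet htr

theorem isStronglyReal_of_det_eq_one {A : GL (Fin 2) R}
    (hdet : (A : Matrix (Fin 2) (Fin 2) R).det = 1) {x y z : R} (hq : x ^ 2 + y * z = 1)
    (hl : (A 0 0 - A 1 1) * x + A 0 1 * z + A 1 0 * y = 0) : IsStronglyReal A := by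
  set H : Matrix (Fin 2) (Fin 2) R := !![x, y; z, -x]
  have hH : H * H = 1 := mul_self_eq_one_of_det_eq_neg_one_of_trace_eq_zero
    (by rw [det_fin_two_of]; linear_combination -hq) (by rw [trace_fin_two_of, add_neg_cancel])
  refine ⟨⟨H, H, hH, hH⟩, Units.ext (by rw [sq]; exact hH), Units.ext ?_⟩
  change H * A * H = ((A⁻¹ : GL (Fin 2) R) : Matrix (Fin 2) (Fin 2) R)
  rw [coe_inv_eq_det_smul_adjugate (by rw [hdet, one_pow]), hdet, one_smul,
    mul_mul_eq_adjugate_of_quadric hq hl]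

end Matrix

theorem isStronglyReal_of_isConj_inv {O : Type*} [CommRing O] [IsDomain O] [ValuationRing O]
    [HenselianRing O (maximalIdeal O)] (h2 : IsUnit (2 : O)) {I : Ideal O}
    {A : GL (Fin 2) (O ⧸ I)} (hA : IsConj A A⁻¹) : IsStronglyReal A := by
  rcases Ideal.Quotient.eq_one_or_eq_neg_one_of_sq_eq_one h2 (det_sq_eq_one_of_isConj_inv hA)
    with hdet | hdet
  · obtain ⟨a, ha⟩ := Ideal.Quotient.mk_surjective (A 0 0 - A 1 1)
    obtain ⟨b, hb⟩ := Ideal.Quotient.mk_surjective (A 0 1)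
    obtain ⟨c, hc⟩ := Ideal.Quotient.mk_surjective (A 1 0)
    obtain ⟨x, y, z, hq, hl⟩ := exists_sq_add_mul_eq_one_and_linear_eq_zero h2 a b c
    refine isStronglyReal_of_det_eq_one hdet (x := Ideal.Quotient.mk I x)
      (y := Ideal.Quotient.mk I y) (z := Ideal.Quotient.mk I z) ?_ ?_
    · simpa using congrArg (Ideal.Quotient.mk I) hq
    · simpa [ha, hb, hc] using congrArg (Ideal.Quotient.mk I) hl
  · have h2' : IsUnit (2 : O ⧸ I) := map_ofNat (Ideal.Quotient.mk I) 2 ▸ h2.map _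
    exact ⟨1, one_pow 2, by rw [inv_eq_self_of_isConj_inv_of_det_eq_neg_one h2' hA hdet]; group⟩

theorem real_implies_strongly_real_GL2_general
    (O : Type) [CommRing O] [IsDomain O] [IsDiscreteValuationRing O]
    [IsAdicComplete (IsLocalRing.maximalIdeal O) O]
    (π : O)
    (hodd : Odd (ringChar (IsLocalRing.ResidueField O)))
    (ℓ : ℕ)
    (A : GL (Fin 2) (O ⧸ Ideal.span {π} ^ ℓ))
    (hreal : IsConj A A⁻¹) :
    ∃ h : GL (Fin 2) (O ⧸ Ideal.span {π} ^ ℓ), h ^ 2 = 1 ∧ h * A * h⁻¹ = A⁻¹ :=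
  isStronglyReal_of_isConj_inv (isUnit_two_of_odd_ringChar_residueField hodd) hreal

theorem real_implies_strongly_real_GL2
    (O : Type) [CommRing O] [IsDomain O] [IsDiscreteValuationRing O]
    [IsAdicComplete (IsLocalRing.maximalIdeal O) O]
    (π : O) (hπ : IsLocalRing.maximalIdeal O = Ideal.span {π})
    [Finite (IsLocalRing.ResidueField O)]
    (hodd : Odd (ringChar (IsLocalRing.ResidueField O)))
    (ℓ : ℕ) (hℓ : 1 ≤ ℓ)
    (A : GL (Fin 2) (O ⧸ Ideal.span {π} ^ ℓ))
    (hreal : IsConj A A⁻¹) :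
    ∃ h : GL (Fin 2) (O ⧸ Ideal.span {π} ^ ℓ), h ^ 2 = 1 ∧ h * A * h⁻¹ = A⁻¹ :=
  real_implies_strongly_real_GL2_general O π hodd ℓ A hreal
end

section
/- Let ℓ ≥ 1 and let A ∈ GU₂(𝔬_ℓ). Then A is real in GU₂(𝔬_ℓ) (i.e., A is conjugate in GU₂(𝔬_ℓ) to A⁻¹) if and only if det(A) ∈ {1, −1} and tr(A) = tr(A⁻¹). -/
open Matrix

/-- The antidiagonal permutation matrix `W`. -/
def Wmat (OO : Type) [CommRing OO] : Matrix (Fin 2) (Fin 2) OO := !![0, 1; 1, 0]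

lemma Wmat_det_isUnit (OO : Type) [CommRing OO] : IsUnit (Wmat OO).det := by
  have : (Wmat OO).det = -1 := by simp [Wmat, Matrix.det_fin_two_of]
  rw [this]; exact isUnit_one.neg

/-- `A* = W (A°)ᵀ W⁻¹`, where `°` is applied entrywise. -/
noncomputable def mstar {OO : Type} [CommRing OO] (c : OO →+* OO)
    (M : Matrix (Fin 2) (Fin 2) OO) : Matrix (Fin 2) (Fin 2) OO :=
  Wmat OO * (M.map c)ᵀ * (Wmat OO)⁻¹

lemma mstar_mul {OO : Type} [CommRing OO] (c : OO →+* OO)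
    (M N : Matrix (Fin 2) (Fin 2) OO) :
    mstar c (M * N) = mstar c N * mstar c M := by
  unfold mstar
  rw [Matrix.map_mul, Matrix.transpose_mul]
  simp only [mul_assoc]
  rw [Matrix.nonsing_inv_mul_cancel_left _ _ (Wmat_det_isUnit OO)]

lemma mstar_one {OO : Type} [CommRing OO] (c : OO →+* OO) :
    mstar c (1 : Matrix (Fin 2) (Fin 2) OO) = 1 := by
  unfold mstar
  rw [Matrix.map_one c c.map_zero c.map_one, Matrix.transpose_one, mul_one,
    Matrix.mul_nonsing_inv _ (Wmat_det_isUnit OO)]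

lemma gu_one {OO : Type} [CommRing OO] (c : OO →+* OO) :
    mstar c ((1 : GL (Fin 2) OO) : Matrix (Fin 2) (Fin 2) OO) *
      ((1 : GL (Fin 2) OO) : Matrix (Fin 2) (Fin 2) OO) = 1 := by
  rw [Units.val_one, mstar_one, one_mul]

lemma gu_mul {OO : Type} [CommRing OO] (c : OO →+* OO) (a b : GL (Fin 2) OO)
    (ha : mstar c ↑a * (↑a : Matrix (Fin 2) (Fin 2) OO) = 1)
    (hb : mstar c ↑b * (↑b : Matrix (Fin 2) (Fin 2) OO) = 1) :
    mstar c (↑(a * b)) * (↑(a * b) : Matrix (Fin 2) (Fin 2) OO) = 1 := by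
  rw [Units.val_mul]
  rw [mstar_mul]
  rw [mul_assoc]
  rw [← mul_assoc (mstar c (↑a : Matrix (Fin 2) (Fin 2) OO))
    (↑a : Matrix (Fin 2) (Fin 2) OO) (↑b : Matrix (Fin 2) (Fin 2) OO)]
  rw [ha, one_mul]
  exact hb

lemma gu_inv {OO : Type} [CommRing OO] (c : OO →+* OO) (a : GL (Fin 2) OO)
    (ha : mstar c ↑a * (↑a : Matrix (Fin 2) (Fin 2) OO) = 1) :
    mstar c (↑a⁻¹) * (↑a⁻¹ : Matrix (Fin 2) (Fin 2) OO) = 1 := by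
  have h1 : mstar c (↑a : Matrix (Fin 2) (Fin 2) OO) = ↑a⁻¹ := by
    calc mstar c (↑a : Matrix (Fin 2) (Fin 2) OO)
        = mstar c (↑a : Matrix (Fin 2) (Fin 2) OO) *
            ((↑a : Matrix (Fin 2) (Fin 2) OO) * (↑a⁻¹ : Matrix (Fin 2) (Fin 2) OO)) := by
          rw [a.mul_inv, mul_one]
      _ = mstar c (↑a : Matrix (Fin 2) (Fin 2) OO) * (↑a : Matrix (Fin 2) (Fin 2) OO) *
            (↑a⁻¹ : Matrix (Fin 2) (Fin 2) OO) := by rw [mul_assoc]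
      _ = ↑a⁻¹ := by rw [ha, one_mul]
  calc mstar c (↑a⁻¹ : Matrix (Fin 2) (Fin 2) OO) * (↑a⁻¹ : Matrix (Fin 2) (Fin 2) OO)
      = mstar c (↑a⁻¹ : Matrix (Fin 2) (Fin 2) OO) *
          mstar c (↑a : Matrix (Fin 2) (Fin 2) OO) := by rw [h1]
    _ = mstar c ((↑a : Matrix (Fin 2) (Fin 2) OO) * (↑a⁻¹ : Matrix (Fin 2) (Fin 2) OO)) :=
        (mstar_mul c _ _).symm
    _ = 1 := by rw [a.mul_inv, mstar_one]

/-- The unitary group `GU₂(𝔬_ℓ)` as a subgroup of `GL₂(𝔒_ℓ)`, with respect to the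
entrywise involution `c`. -/
noncomputable def GU2 (OO : Type) [CommRing OO] (c : OO →+* OO) :
    Subgroup (GL (Fin 2) OO) where
  carrier := {A | mstar c (A : Matrix (Fin 2) (Fin 2) OO) * (A : Matrix (Fin 2) (Fin 2) OO) = 1}
  one_mem' := gu_one c
  mul_mem' := fun ha hb => gu_mul c _ _ ha hb
  inv_mem' := fun ha => gu_inv c _ ha

/-!
If `A` is real then `d = det A` satisfies `d² = 1`, while unitarity gives `d° d = 1`; hence
`d° = d`, so `d` lies in `𝔬_ℓ`, where `2` is a unit and `d² = 1` forces `d = ±1`.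

Conversely, if `det A = -1` then `A⁻¹ = -adj A = A - tr A`, so `tr A = tr A⁻¹` forces `tr A = 0`
and `A⁻¹ = A`. If `det A = 1` then `A* = A⁻¹ = adj A` says `A = [[a, b ε], [c ε, d]]` with
`a, b, c, d ∈ 𝔬_ℓ`, and `H = w [[x, y ε], [z ε, -x]]` satisfies `H A = adj A · H` as soon as
`(a - d) x + ε² (b z + c y) = 0`, and `H* H = 1` as soon as `w° w (x² + ε² y z) = -1`. The first
equation has a solution with `x² + ε² y z` a unit because divisibility in `𝔬_ℓ` is total; the
second then asks for an element of norm `-(x² + ε² y z)⁻¹`, and every unit of `𝔬_ℓ` is a norm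
`α² - ε² β²`: solve over the residue field and lift with Hensel's lemma over the complete `𝔬`.
-/

open Polynomial IsLocalRing

theorem PreValuationRing.of_surjective {A B : Type*} [CommRing A] [CommRing B] [PreValuationRing A]
    (f : A →+* B) (hf : Function.Surjective f) : PreValuationRing B := by
  refine PreValuationRing.iff_dvd_total.mpr ⟨fun a b => ?_⟩
  obtain ⟨a, rfl⟩ := hf a
  obtain ⟨b, rfl⟩ := hf b
  exact (ValuationRing.dvd_total a b).imp (map_dvd f) (map_dvd f)

theorem FiniteField.exists_sq_sub_mul_sq_eq {F : Type*} [Field F] [Finite F] (hF : ringChar F ≠ 2)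
    {u : F} (hu : u ≠ 0) (v : F) : ∃ a b : F, a ^ 2 - u * b ^ 2 = v := by
  have := Fintype.ofFinite F
  obtain ⟨a, b, hab⟩ := FiniteField.exists_root_sum_quadratic
    (degree_X_pow_add_C two_pos (-v)) (degree_C_mul_X_pow 2 (neg_ne_zero.mpr hu))
    (FiniteField.odd_card_of_char_ne_two hF)
  refine ⟨a, b, ?_⟩
  simp only [eval_add, eval_pow, eval_X, eval_C, eval_mul] at hab
  linear_combination hab

namespace IsLocalRing

variable {R : Type*} [CommRing R] [IsLocalRing R]

theorem eq_one_or_eq_neg_one_of_sq_eq_one (h2 : IsUnit (2 : R)) {r : R} (hr : r ^ 2 = 1) :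
    r = 1 ∨ r = -1 := by
  have hprod : (r - 1) * (r + 1) = 0 := by linear_combination hr
  have hsum : IsUnit (-(r - 1) + (r + 1)) := by ring_nf; exact h2
  rcases isUnit_or_isUnit_of_isUnit_add hsum with h | h
  · exact .inr (eq_neg_of_add_eq_zero_left (((IsUnit.neg_iff _).mp h).mul_right_eq_zero.mp hprod))
  · exact .inl (sub_eq_zero.mp (h.mul_left_eq_zero.mp hprod))

/-- Divide by whichever of `e, b, c` divides the other two. -/
theorem exists_isUnit_sq_add_mul_and_mul_add_eq_zero [PreValuationRing R] {u : R} (hu : IsUnit u)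
    (e b c : R) :
    ∃ x y z : R, IsUnit (x ^ 2 + u * (y * z)) ∧ e * x + u * (b * z + c * y) = 0 := by
  by_cases hb : b ∣ e ∧ b ∣ c
  · obtain ⟨e', rfl⟩ := hb.1
    refine ⟨1, 0, -(↑hu.unit⁻¹ * e'), by simp, ?_⟩
    linear_combination (-(b * e')) * hu.mul_val_inv
  by_cases hc : c ∣ e ∧ c ∣ b
  · obtain ⟨e', rfl⟩ := hc.1
    refine ⟨1, -(↑hu.unit⁻¹ * e'), 0, by simp, ?_⟩
    linear_combination (-(c * e')) * hu.mul_val_inv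
  have hbe : ¬ b ∣ e := fun hbe => by
    rcases ValuationRing.dvd_total b c with hbc | hcb
    · exact hb ⟨hbe, hbc⟩
    · exact hc ⟨hcb.trans hbe, hcb⟩
  have hce : ¬ c ∣ e := fun hce => by
    rcases ValuationRing.dvd_total c b with hcb | hbc
    · exact hc ⟨hce, hcb⟩
    · exact hb ⟨hbc.trans hce, hbc⟩
  obtain ⟨b', rfl⟩ := (ValuationRing.dvd_total e b).resolve_right hbe
  obtain ⟨c', rfl⟩ := (ValuationRing.dvd_total e c).resolve_right hce
  have hb' : b' ∈ maximalIdeal R := fun hb' => hbe ⟨↑hb'.unit⁻¹, by simp [mul_assoc]⟩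
  have hc' : c' ∈ maximalIdeal R := fun hc' => hce ⟨↑hc'.unit⁻¹, by simp [mul_assoc]⟩
  refine ⟨-(u * (b' + c')), 1, 1, ?_, by ring⟩
  have hx : (-(u * (b' + c'))) ^ 2 ∈ maximalIdeal R :=
    Ideal.pow_mem_of_mem _ (neg_mem (Ideal.mul_mem_left _ _ (add_mem hb' hc'))) 2 two_pos
  rw [← residue_ne_zero_iff_isUnit, map_add, (residue_eq_zero_iff _).mpr hx, zero_add, mul_one,
    mul_one]
  exact (residue_ne_zero_iff_isUnit u).mpr hu

theorem isUnit_two (hR : ringChar (ResidueField R) ≠ 2) : IsUnit (2 : R) := by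
  rw [← residue_ne_zero_iff_isUnit, map_ofNat]
  exact Ring.two_ne_zero hR

theorem exists_sq_eq_of_sub_sq_mem [HenselianRing R (maximalIdeal R)] (h2 : IsUnit (2 : R))
    {x t : R} (ht : IsUnit t) (hxt : x - t ^ 2 ∈ maximalIdeal R) : ∃ a, a ^ 2 = x := by
  have hderiv : (derivative (X ^ 2 - C x)).eval t = 2 * t := by
    rw [derivative_sub, derivative_X_sq, derivative_C, sub_zero, eval_mul, eval_C, eval_X]
  obtain ⟨a, ha, -⟩ := HenselianRing.is_henselian (X ^ 2 - C x)
    (monic_X_pow_sub_C x two_ne_zero) t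
    (by rw [eval_sub, eval_pow, eval_X, eval_C, ← neg_sub]; exact neg_mem hxt)
    (by rw [hderiv]; exact (h2.mul ht).map _)
  exact ⟨a, by simpa [sub_eq_zero] using ha⟩

theorem exists_sq_sub_mul_sq_eq [HenselianRing R (maximalIdeal R)] [Finite (ResidueField R)]
    (hR : ringChar (ResidueField R) ≠ 2) {u v : R} (hu : IsUnit u) (hv : IsUnit v) :
    ∃ a b : R, a ^ 2 - u * b ^ 2 = v := by
  have h2 := isUnit_two hR
  obtain ⟨a₀, b₀, hab₀⟩ := FiniteField.exists_sq_sub_mul_sq_eq hR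
    ((residue_ne_zero_iff_isUnit u).mpr hu) (residue R v)
  obtain ⟨s, rfl⟩ := residue_surjective a₀
  obtain ⟨t, rfl⟩ := residue_surjective b₀
  by_cases hs : IsUnit s
  · obtain ⟨a, ha⟩ := exists_sq_eq_of_sub_sq_mem h2 hs (x := v + u * t ^ 2) (by
      rw [← residue_eq_zero_iff]
      simp only [map_sub, map_add, map_mul, map_pow]
      linear_combination -hab₀)
    exact ⟨a, t, by rw [ha]; ring⟩
  · have hs0 : residue R s = 0 := (residue_eq_zero_iff s).mpr hs
    have ht : IsUnit t := by
      rw [← residue_ne_zero_iff_isUnit]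
      intro ht
      rw [hs0, ht] at hab₀
      exact (residue_ne_zero_iff_isUnit v).mpr hv (by linear_combination -hab₀)
    obtain ⟨b, hb⟩ := exists_sq_eq_of_sub_sq_mem h2 ht (x := -(↑hu.unit⁻¹ * v)) (by
      rw [← residue_eq_zero_iff]
      have hinv : residue R ↑hu.unit⁻¹ * residue R u = 1 := by
        rw [← map_mul, hu.val_inv_mul, map_one]
      simp only [map_sub, map_neg, map_mul, map_pow]
      rw [hs0] at hab₀
      linear_combination (residue R ↑hu.unit⁻¹) * hab₀ + residue R t ^ 2 * hinv)
    exact ⟨0, b, by rw [hb]; linear_combination v * hu.mul_val_inv⟩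

theorem exists_sq_sub_mul_sq_eq_of_surjective [HenselianRing R (maximalIdeal R)]
    [Finite (ResidueField R)] (hR : ringChar (ResidueField R) ≠ 2) {T : Type*} [CommRing T]
    (f : R →+* T) [IsLocalHom f] (hf : Function.Surjective f) {u : R} (hu : IsUnit u) {n : T}
    (hn : IsUnit n) : ∃ a b : T, a ^ 2 - f u * b ^ 2 = n := by
  obtain ⟨m, rfl⟩ := hf n
  obtain ⟨a, b, hab⟩ := exists_sq_sub_mul_sq_eq hR hu (isUnit_of_map_unit f m hn)
  exact ⟨f a, f b, by rw [← hab]; simp⟩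

end IsLocalRing

def IsBasisOneAnd (R : Type*) {S : Type*} [CommRing R] [CommRing S] [Algebra R S] (ε : S) :
    Prop :=
  ∀ z : S, ∃! xy : R × R, z = algebraMap R S xy.1 + algebraMap R S xy.2 * ε

section QuadraticAlgebra

variable {R S : Type*} [CommRing R] [CommRing S] [Algebra R S] {ε : S}

theorem apply_algebraMap_add_mul {σ : S ≃ₐ[R] S} (hσ : σ ε = -ε) (x y : R) :
    σ (algebraMap R S x + algebraMap R S y * ε) =
      algebraMap R S x + algebraMap R S (-y) * ε := by
  simp [hσ]

namespace IsBasisOneAnd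

theorem eq_and_eq_of_add_mul_eq (hbasis : IsBasisOneAnd R ε) {x₁ y₁ x₂ y₂ : R}
    (h : algebraMap R S x₁ + algebraMap R S y₁ * ε =
      algebraMap R S x₂ + algebraMap R S y₂ * ε) :
    x₁ = x₂ ∧ y₁ = y₂ :=
  Prod.ext_iff.mp ((hbasis _).unique (y₁ := (x₁, y₁)) (y₂ := (x₂, y₂)) rfl h)

theorem algebraMap_injective (hbasis : IsBasisOneAnd R ε) : Function.Injective (algebraMap R S) :=
  fun x₁ x₂ h => (hbasis.eq_and_eq_of_add_mul_eq (y₁ := 0) (y₂ := 0) (by rw [h])).1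

theorem exists_eq_algebraMap_of_apply_eq (hbasis : IsBasisOneAnd R ε) (h2 : IsUnit (2 : R))
    {σ : S ≃ₐ[R] S} (hσ : σ ε = -ε) {z : S} (hz : σ z = z) :
    ∃ r, z = algebraMap R S r := by
  obtain ⟨⟨x, y⟩, rfl⟩ := (hbasis z).exists
  rw [apply_algebraMap_add_mul hσ] at hz
  have hy : y = 0 :=
    h2.mul_right_eq_zero.mp (by linear_combination -(hbasis.eq_and_eq_of_add_mul_eq hz).2)
  exact ⟨x, by simp [hy]⟩

theorem exists_eq_algebraMap_mul_of_apply_eq_neg (hbasis : IsBasisOneAnd R ε) (h2 : IsUnit (2 : R))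
    {σ : S ≃ₐ[R] S} (hσ : σ ε = -ε) {z : S} (hz : σ z = -z) :
    ∃ r, z = algebraMap R S r * ε := by
  obtain ⟨⟨x, y⟩, rfl⟩ := (hbasis z).exists
  rw [apply_algebraMap_add_mul hσ, neg_add, ← map_neg, neg_mul_eq_neg_mul, ← map_neg] at hz
  have hx : x = 0 :=
    h2.mul_right_eq_zero.mp (by linear_combination (hbasis.eq_and_eq_of_add_mul_eq hz).1)
  exact ⟨y, by simp [hx]⟩

end IsBasisOneAnd

end QuadraticAlgebra

namespace Matrix.GeneralLinearGroup

variable {n S : Type*} [Fintype n] [DecidableEq n] [CommRing S]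

theorem det_eq_of_isConj {A B : GL n S} (h : IsConj A B) :
    (A : Matrix n n S).det = (B : Matrix n n S).det := by
  obtain ⟨g, rfl⟩ := isConj_iff.mp h
  exact (det_units_conj (g : GL n S) A).symm

theorem trace_eq_of_isConj {A B : GL n S} (h : IsConj A B) :
    (A : Matrix n n S).trace = (B : Matrix n n S).trace := by
  obtain ⟨g, rfl⟩ := isConj_iff.mp h
  exact (trace_units_conj (g : GL n S) A).symm

theorem isConj_of_mul_eq {G : Subgroup (GL n S)} {A B H : G}
    (h : ((H : GL n S) : Matrix n n S) * ((A : GL n S) : Matrix n n S) =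
      ((B : GL n S) : Matrix n n S) * ((H : GL n S) : Matrix n n S)) : IsConj A B :=
  ⟨toUnits H, Subtype.ext (Units.ext h)⟩

theorem coe_inv_of_det_eq_one {A : GL n S} (h : (A : Matrix n n S).det = 1) :
    ↑A⁻¹ = adjugate (A : Matrix n n S) := by
  rw [coe_units_inv, inv_def, h, Ring.inverse_one, one_smul]

theorem inv_eq_self_of_det_eq_neg_one {A : GL (Fin 2) S} (h2 : IsUnit (2 : S))
    (hdet : (A : Matrix (Fin 2) (Fin 2) S).det = -1)
    (htr : (A : Matrix (Fin 2) (Fin 2) S).trace = (↑A⁻¹ : Matrix (Fin 2) (Fin 2) S).trace) :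
    A⁻¹ = A := by
  have hinv : (↑A⁻¹ : Matrix (Fin 2) (Fin 2) S) = -adjugate ↑A := by
    rw [coe_units_inv]
    exact inv_eq_left_inv (by rw [neg_mul, adjugate_mul, hdet, neg_one_smul, neg_neg])
  rw [hinv, trace_neg, adjugate_fin_two, trace_fin_two_of, trace_fin_two] at htr
  have htr0 : A 0 0 + A 1 1 = 0 := h2.mul_right_eq_zero.mp (by linear_combination htr)
  ext i j
  rw [hinv, adjugate_fin_two]
  fin_cases i <;> fin_cases j <;>
    simp only [Fin.zero_eta, Fin.mk_one, neg_apply, of_apply, cons_val', cons_val_zero,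
      cons_val_one, cons_val_fin_one, neg_neg] <;>
    linear_combination -htr0

end Matrix.GeneralLinearGroup

section Mstar

variable {S : Type} [CommRing S] (σ : S →+* S)

theorem inv_Wmat : (Wmat S)⁻¹ = Wmat S :=
  inv_eq_right_inv (by simp [Wmat, Matrix.one_fin_two])

theorem mstar_fin_two (a b c d : S) :
    mstar σ !![a, b; c, d] = !![σ d, σ b; σ c, σ a] := by
  rw [mstar, inv_Wmat, Wmat, eta_fin_two ((!![a, b; c, d].map σ)ᵀ)]
  simp

theorem det_mstar (M : Matrix (Fin 2) (Fin 2) S) : (mstar σ M).det = σ M.det := by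
  rw [mstar, inv_Wmat, det_mul, det_mul, det_transpose, RingHom.map_det, RingHom.mapMatrix_apply]
  simp [Wmat, det_fin_two_of]

def conjugator (w x y z ε : S) : Matrix (Fin 2) (Fin 2) S :=
  !![w * x, w * (y * ε); w * (z * ε), -(w * x)]

variable {σ}

theorem mstar_conjugator_mul_self {w x y z ε : S} (hx : σ x = x) (hy : σ y = y) (hz : σ z = z)
    (hε : σ ε = -ε) (hw : σ w * w * (x ^ 2 + ε ^ 2 * (y * z)) = -1) :
    mstar σ (conjugator w x y z ε) * conjugator w x y z ε = 1 := by
  rw [conjugator, mstar_fin_two, Matrix.mul_fin_two, Matrix.one_fin_two]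
  simp only [map_neg, map_mul, hx, hy, hz, hε]
  ext i j
  fin_cases i <;> fin_cases j <;>
    simp only [Fin.zero_eta, Fin.mk_one, of_apply, cons_val', cons_val_zero, cons_val_one,
      cons_val_fin_one]
  · linear_combination -hw
  · ring
  · ring
  · linear_combination -hw

theorem conjugator_mul {w x y z ε a b c d : S} (h : (a - d) * x + ε ^ 2 * (b * z + c * y) = 0) :
    conjugator w x y z ε * !![a, b * ε; c * ε, d] =
      !![d, -(b * ε); -(c * ε), a] * conjugator w x y z ε := by
  rw [conjugator, Matrix.mul_fin_two, Matrix.mul_fin_two]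
  ext i j
  fin_cases i <;> fin_cases j <;>
    simp only [Fin.zero_eta, Fin.mk_one, of_apply, cons_val', cons_val_zero, cons_val_one,
      cons_val_fin_one]
  · linear_combination w * h
  · ring
  · ring
  · linear_combination w * h

end Mstar

namespace GU2

variable {S : Type} [CommRing S] {σ : S →+* S}

theorem mstar_eq_coe_inv (A : GU2 S σ) :
    mstar σ ((A : GL (Fin 2) S) : Matrix (Fin 2) (Fin 2) S) = ↑(A : GL (Fin 2) S)⁻¹ :=
  ((coe_units_inv _).trans (inv_eq_left_inv A.2)).symm

theorem apply_det_mul_det (A : GU2 S σ) :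
    σ ((A : GL (Fin 2) S) : Matrix (Fin 2) (Fin 2) S).det *
      ((A : GL (Fin 2) S) : Matrix (Fin 2) (Fin 2) S).det = 1 := by
  rw [← det_mstar, ← det_mul, A.2, det_one]

noncomputable def ofMstarMulEqOne (H : Matrix (Fin 2) (Fin 2) S) (h : mstar σ H * H = 1) :
    GU2 S σ :=
  ⟨⟨H, mstar σ H, mul_eq_one_comm.mp h, h⟩, h⟩

variable {R : Type} [CommRing R] [Algebra R S] {ε : S}

theorem det_eq_one_or_neg_one_of_isConj_inv [IsLocalRing R] (h2 : IsUnit (2 : R))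
    (hbasis : IsBasisOneAnd R ε) {σ : S ≃ₐ[R] S} (hσ : σ ε = -ε)
    {A : GU2 S (σ : S →+* S)} (h : IsConj A A⁻¹) :
    ((A : GL (Fin 2) S) : Matrix (Fin 2) (Fin 2) S).det = 1 ∨
      ((A : GL (Fin 2) S) : Matrix (Fin 2) (Fin 2) S).det = -1 := by
  set d := ((A : GL (Fin 2) S) : Matrix (Fin 2) (Fin 2) S).det
  have hdd : d * d = 1 := by
    have hconj : d = (↑(A : GL (Fin 2) S)⁻¹ : Matrix (Fin 2) (Fin 2) S).det :=
      Matrix.GeneralLinearGroup.det_eq_of_isConj ((GU2 S σ).subtype.map_isConj h)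
    nth_rw 2 [hconj]
    rw [← det_mul, ← Units.val_mul, mul_inv_cancel, Units.val_one, det_one]
  have hfix : σ d = d := by
    calc σ d = σ d * d * d := by rw [mul_assoc, hdd, mul_one]
      _ = d := by rw [show σ d * d = 1 from apply_det_mul_det A, one_mul]
  obtain ⟨r, hr⟩ := hbasis.exists_eq_algebraMap_of_apply_eq h2 hσ hfix
  have hr2 : r ^ 2 = 1 := hbasis.algebraMap_injective (by rw [map_pow, ← hr, sq, hdd, map_one])
  rcases IsLocalRing.eq_one_or_eq_neg_one_of_sq_eq_one h2 hr2 with rfl | rfl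
  · exact .inl (by rw [hr, map_one])
  · exact .inr (by rw [hr, map_neg, map_one])

theorem exists_eq_algebraMap_entries_of_det_eq_one (h2 : IsUnit (2 : R))
    (hbasis : IsBasisOneAnd R ε) {σ : S ≃ₐ[R] S} (hσ : σ ε = -ε) {A : GU2 S (σ : S →+* S)}
    (hdet : ((A : GL (Fin 2) S) : Matrix (Fin 2) (Fin 2) S).det = 1) :
    ∃ a b c d : R, ((A : GL (Fin 2) S) : Matrix (Fin 2) (Fin 2) S) =
      !![algebraMap R S a, algebraMap R S b * ε; algebraMap R S c * ε, algebraMap R S d] := by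
  have h := mstar_eq_coe_inv A
  rw [Matrix.GeneralLinearGroup.coe_inv_of_det_eq_one hdet,
    eta_fin_two ((A : GL (Fin 2) S) : Matrix (Fin 2) (Fin 2) S), mstar_fin_two,
    adjugate_fin_two_of] at h
  have entry := fun i j => congrFun (congrFun h i) j
  obtain ⟨a, ha⟩ := hbasis.exists_eq_algebraMap_of_apply_eq h2 hσ (by simpa using entry 1 1)
  obtain ⟨b, hb⟩ :=
    hbasis.exists_eq_algebraMap_mul_of_apply_eq_neg h2 hσ (by simpa using entry 0 1)
  obtain ⟨c, hc⟩ :=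
    hbasis.exists_eq_algebraMap_mul_of_apply_eq_neg h2 hσ (by simpa using entry 1 0)
  obtain ⟨d, hd⟩ := hbasis.exists_eq_algebraMap_of_apply_eq h2 hσ (by simpa using entry 0 0)
  refine ⟨a, b, c, d, ?_⟩
  rw [eta_fin_two ((A : GL (Fin 2) S) : Matrix (Fin 2) (Fin 2) S), ha, hb, hc, hd]

theorem isConj_inv_of_det_eq_one [IsLocalRing R] [PreValuationRing R] (h2 : IsUnit (2 : R))
    {u : R} (hu : IsUnit u) (hnorm : ∀ n : R, IsUnit n → ∃ α β : R, α ^ 2 - u * β ^ 2 = n)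
    (hbasis : IsBasisOneAnd R ε) {σ : S ≃ₐ[R] S} (hσ : σ ε = -ε)
    (hε : ε ^ 2 = algebraMap R S u) {A : GU2 S (σ : S →+* S)}
    (hdet : ((A : GL (Fin 2) S) : Matrix (Fin 2) (Fin 2) S).det = 1) : IsConj A A⁻¹ := by
  obtain ⟨a, b, c, d, hA⟩ := exists_eq_algebraMap_entries_of_det_eq_one h2 hbasis hσ hdet
  obtain ⟨x, y, z, hv, hxyz⟩ :=
    IsLocalRing.exists_isUnit_sq_add_mul_and_mul_add_eq_zero hu (a - d) b c
  obtain ⟨α, β, hαβ⟩ := hnorm _ (hv.unit⁻¹.isUnit.neg)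
  set w := algebraMap R S α + algebraMap R S β * ε
  have hw :
      σ w * w * (algebraMap R S x ^ 2 + ε ^ 2 * (algebraMap R S y * algebraMap R S z)) = -1 := by
    have hnw : σ w * w = algebraMap R S (α ^ 2 - u * β ^ 2) := by
      simp only [w, map_add, map_mul, AlgEquiv.commutes, hσ, map_sub, map_pow]
      linear_combination (-(algebraMap R S β) ^ 2) * hε
    rw [hnw, hαβ, hε, ← map_pow, ← map_mul, ← map_mul, ← map_add, ← map_mul, neg_mul,
      hv.val_inv_mul, map_neg, map_one]
  have hfix (r : R) : (σ : S →+* S) (algebraMap R S r) = algebraMap R S r := σ.commutes r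
  let H : GU2 S (σ : S →+* S) := ofMstarMulEqOne
    (conjugator w (algebraMap R S x) (algebraMap R S y) (algebraMap R S z) ε)
    (mstar_conjugator_mul_self (hfix x) (hfix y) (hfix z) hσ hw)
  refine Matrix.GeneralLinearGroup.isConj_of_mul_eq (H := H) ?_
  rw [Subgroup.coe_inv, Matrix.GeneralLinearGroup.coe_inv_of_det_eq_one hdet, hA,
    adjugate_fin_two_of]
  refine conjugator_mul ?_
  rw [hε]
  simpa only [map_add, map_mul, map_sub, map_zero] using congrArg (algebraMap R S) hxyz

theorem isConj_inv_of_det_eq_neg_one (h2 : IsUnit (2 : S)) {A : GU2 S σ}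
    (hdet : ((A : GL (Fin 2) S) : Matrix (Fin 2) (Fin 2) S).det = -1)
    (htr : ((A : GL (Fin 2) S) : Matrix (Fin 2) (Fin 2) S).trace =
      (((A⁻¹ : GU2 S σ) : GL (Fin 2) S) : Matrix (Fin 2) (Fin 2) S).trace) :
    IsConj A A⁻¹ := by
  rw [show A⁻¹ = A from
    Subtype.ext (Matrix.GeneralLinearGroup.inv_eq_self_of_det_eq_neg_one h2 hdet htr)]

end GU2

theorem real_iff_det_trace_GU2_general
    (O : Type) [CommRing O] [IsDomain O] [IsDiscreteValuationRing O]
    [IsAdicComplete (IsLocalRing.maximalIdeal O) O]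
    (π : O) (hπ : IsLocalRing.maximalIdeal O = Ideal.span {π})
    [Finite (IsLocalRing.ResidueField O)]
    (hodd : Odd (ringChar (IsLocalRing.ResidueField O)))
    (ℓ : ℕ) (hℓ : 1 ≤ ℓ)
    -- the unramified quadratic extension 𝔒_ℓ = 𝔬_ℓ[ε]
    (OO : Type) [CommRing OO] [Algebra (O ⧸ Ideal.span {π} ^ ℓ) OO]
    (ε : OO) (u : O) (hu : IsUnit u)
    (hε2 : ε ^ 2 = algebraMap (O ⧸ Ideal.span {π} ^ ℓ) OO
      (Ideal.Quotient.mk (Ideal.span {π} ^ ℓ) u))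
    (hbasis : ∀ z : OO, ∃! xy : (O ⧸ Ideal.span {π} ^ ℓ) × (O ⧸ Ideal.span {π} ^ ℓ),
      z = algebraMap (O ⧸ Ideal.span {π} ^ ℓ) OO xy.1 +
        algebraMap (O ⧸ Ideal.span {π} ^ ℓ) OO xy.2 * ε)
    -- the Galois involution `x ↦ x°`
    (cj : OO ≃ₐ[O ⧸ Ideal.span {π} ^ ℓ] OO) (hcj : cj ε = -ε)
    (A : ↥(GU2 OO (cj : OO →+* OO))) :
    IsConj A A⁻¹ ↔
      ((((A : GL (Fin 2) OO) : Matrix (Fin 2) (Fin 2) OO).det = 1 ∨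
        ((A : GL (Fin 2) OO) : Matrix (Fin 2) (Fin 2) OO).det = -1) ∧
       Matrix.trace ((A : GL (Fin 2) OO) : Matrix (Fin 2) (Fin 2) OO) =
         Matrix.trace (((A⁻¹ : ↥(GU2 OO (cj : OO →+* OO))) : GL (Fin 2) OO) :
           Matrix (Fin 2) (Fin 2) OO)) := by
  have hI : Ideal.span {π} ^ ℓ ≤ maximalIdeal O := hπ ▸ Ideal.pow_le_self (by omega)
  have : Nontrivial (O ⧸ Ideal.span {π} ^ ℓ) :=
    Ideal.Quotient.nontrivial_iff.mpr (ne_top_of_le_ne_top (maximalIdeal.isMaximal O).ne_top hI)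
  have : IsLocalRing (O ⧸ Ideal.span {π} ^ ℓ) := .of_surjective' _ Ideal.Quotient.mk_surjective
  have : PreValuationRing (O ⧸ Ideal.span {π} ^ ℓ) :=
    .of_surjective _ Ideal.Quotient.mk_surjective
  have : IsLocalHom (Ideal.Quotient.mk (Ideal.span {π} ^ ℓ)) := isLocalHom_of_le_jacobson_bot _
    (by rwa [jacobson_eq_maximalIdeal ⊥ bot_ne_top])
  have hchar : ringChar (ResidueField O) ≠ 2 := fun h =>
    Nat.not_odd_iff_even.mpr even_two (h ▸ hodd)
  have h2 : IsUnit (2 : O ⧸ Ideal.span {π} ^ ℓ) :=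
    map_ofNat (Ideal.Quotient.mk (Ideal.span {π} ^ ℓ)) 2 ▸ (isUnit_two hchar).map _
  constructor
  · intro h
    exact ⟨GU2.det_eq_one_or_neg_one_of_isConj_inv h2 hbasis hcj h,
      Matrix.GeneralLinearGroup.trace_eq_of_isConj ((GU2 OO _).subtype.map_isConj h)⟩
  · rintro ⟨hdet | hdet, htr⟩
    · exact GU2.isConj_inv_of_det_eq_one h2 (hu.map _) (fun n hn =>
        exists_sq_sub_mul_sq_eq_of_surjective hchar _ Ideal.Quotient.mk_surjective hu hn)
        hbasis hcj hε2 hdet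
    · exact GU2.isConj_inv_of_det_eq_neg_one
        (map_ofNat (algebraMap (O ⧸ Ideal.span {π} ^ ℓ) OO) 2 ▸ h2.map _) hdet htr

theorem real_iff_det_trace_GU2
    (O : Type) [CommRing O] [IsDomain O] [IsDiscreteValuationRing O]
    [IsAdicComplete (IsLocalRing.maximalIdeal O) O]
    (π : O) (hπ : IsLocalRing.maximalIdeal O = Ideal.span {π})
    [Finite (IsLocalRing.ResidueField O)]
    (hodd : Odd (ringChar (IsLocalRing.ResidueField O)))
    (ℓ : ℕ) (hℓ : 1 ≤ ℓ)
    -- the unramified quadratic extension 𝔒_ℓ = 𝔬_ℓ[ε]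
    (OO : Type) [CommRing OO] [Algebra (O ⧸ Ideal.span {π} ^ ℓ) OO]
    (ε : OO) (u : O) (hu : IsUnit u)
    (hnonsq : ¬ ∃ t : IsLocalRing.ResidueField O, t ^ 2 = IsLocalRing.residue O u)
    (hε2 : ε ^ 2 = algebraMap (O ⧸ Ideal.span {π} ^ ℓ) OO
      (Ideal.Quotient.mk (Ideal.span {π} ^ ℓ) u))
    (hbasis : ∀ z : OO, ∃! xy : (O ⧸ Ideal.span {π} ^ ℓ) × (O ⧸ Ideal.span {π} ^ ℓ),
      z = algebraMap (O ⧸ Ideal.span {π} ^ ℓ) OO xy.1 +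
        algebraMap (O ⧸ Ideal.span {π} ^ ℓ) OO xy.2 * ε)
    -- the Galois involution `x ↦ x°`
    (cj : OO ≃ₐ[O ⧸ Ideal.span {π} ^ ℓ] OO) (hcj : cj ε = -ε)
    (A : ↥(GU2 OO (cj : OO →+* OO))) :
    IsConj A A⁻¹ ↔
      ((((A : GL (Fin 2) OO) : Matrix (Fin 2) (Fin 2) OO).det = 1 ∨
        ((A : GL (Fin 2) OO) : Matrix (Fin 2) (Fin 2) OO).det = -1) ∧
       Matrix.trace ((A : GL (Fin 2) OO) : Matrix (Fin 2) (Fin 2) OO) =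
         Matrix.trace (((A⁻¹ : ↥(GU2 OO (cj : OO →+* OO))) : GL (Fin 2) OO) :
           Matrix (Fin 2) (Fin 2) OO)) :=
  real_iff_det_trace_GU2_general O π hπ hodd ℓ hℓ OO ε u hu hε2 hbasis cj hcj A
end

section
/- Let ℓ ≥ 1. The number of elements g ∈ GL₂(𝔬_ℓ) with g² = I equals (q + 1)·q^{2ℓ−1} + 2. -/
/-!
An involution of `GL₂(R)`, for `R` a finite local ring in which `2` is a unit, is either `±1` or
has trace `0` (and determinant `-1`), so the involutions are `±1` and the matrices
`!![a, b; c, -a]` with `a ^ 2 + b * c = 1`. Let `N t` be the number of pairs `(b, c)` with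
`b * c = t`. It only depends on `t` up to units, and one of the factors of
`1 - a ^ 2 = (1 - a) * (1 + a)` is a unit, so `N (1 - a ^ 2) + |Rˣ| = N (1 - a) + N (1 + a)`.
Summing over `a` gives `2 |R| ^ 2 - |R| |Rˣ| = |R| (|R| + |𝔪|)` solutions. For `R = 𝔬 ⧸ 𝔭 ^ ℓ`
we have `|R| = q ^ ℓ` and `|𝔪| = q ^ (ℓ - 1)`.
-/

open IsLocalRing Matrix

theorem Matrix.fin_two_eq_fin_two_iff {α : Type*} {a b c d a' b' c' d' : α} :
    !![a, b; c, d] = !![a', b'; c', d'] ↔ a = a' ∧ b = b' ∧ c = c' ∧ d = d' := by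
  rw [← Matrix.ext_iff]
  simp [Fin.forall_fin_two, and_assoc]

def Units.subtypePowEqOneEquiv {M : Type*} [Monoid M] {n : ℕ} (hn : n ≠ 0) :
    {u : Mˣ // u ^ n = 1} ≃ {x : M // x ^ n = 1} where
  toFun u := ⟨u.1, by rw [← Units.val_pow_eq_pow_val, u.2, Units.val_one]⟩
  invFun x := ⟨Units.ofPowEqOne x n x.2 hn, Units.pow_ofPowEqOne x.2 hn⟩
  left_inv u := Subtype.ext (Units.ext rfl)
  right_inv x := rfl

section MulFiber

variable {R : Type*} [CommRing R]

theorem card_mul_eq_units_mul (u : Rˣ) (t : R) :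
    Nat.card {p : R × R // p.1 * p.2 = u * t} = Nat.card {p : R × R // p.1 * p.2 = t} :=
  Nat.card_congr
    { toFun p := ⟨(↑u⁻¹ * p.1.1, p.1.2), by rw [mul_assoc, p.2, Units.inv_mul_cancel_left]⟩
      invFun p := ⟨(u * p.1.1, p.1.2), by rw [mul_assoc, p.2]⟩
      left_inv p := by simp
      right_inv p := by simp }

theorem card_mul_eq_one : Nat.card {p : R × R // p.1 * p.2 = 1} = Nat.card Rˣ :=
  Nat.card_congr <| (Equiv.subtypeEquivRight fun p => by rw [mul_comm p.2 p.1, and_self]).trans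
    (unitsEquivProdSubtype R).symm

theorem card_mul_eq_of_isUnit {t : R} (ht : IsUnit t) :
    Nat.card {p : R × R // p.1 * p.2 = t} = Nat.card Rˣ := by
  obtain ⟨u, rfl⟩ := ht
  simpa using (card_mul_eq_units_mul u 1).trans card_mul_eq_one

theorem sum_card_mul_eq [Fintype R] :
    ∑ t : R, Nat.card {p : R × R // p.1 * p.2 = t} = Nat.card R ^ 2 := by
  rw [← Nat.card_sigma, Nat.card_congr (Equiv.sigmaFiberEquiv _), Nat.card_prod, sq]

end MulFiber

section LocalRing

variable {R : Type*} [CommRing R] [IsLocalRing R]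

theorem card_units_add_card_maximalIdeal [Finite R] :
    Nat.card Rˣ + Nat.card (maximalIdeal R) = Nat.card R := by
  classical
  rw [← Nat.card_congr (Equiv.sumCompl fun x : R => IsUnit x), Nat.card_sum,
    ← Nat.card_congr (Equiv.ofBijective (fun u : Rˣ => (⟨u, u.isUnit⟩ : {x : R // IsUnit x}))
      ⟨fun _ _ h => Units.ext (congrArg Subtype.val h), fun x => ⟨x.2.unit, by simp⟩⟩)]
  rfl

variable (h2 : IsUnit (2 : R))
include h2

theorem isUnit_one_sub_or_isUnit_one_add (a : R) : IsUnit (1 - a) ∨ IsUnit (1 + a) :=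
  isUnit_or_isUnit_of_isUnit_add (by rwa [sub_add_add_cancel, one_add_one_eq_two])

theorem sq_eq_one_iff_of_isUnit_two {x : R} : x ^ 2 = 1 ↔ x = 1 ∨ x = -1 := by
  refine ⟨fun hx => ?_, by rintro (rfl | rfl) <;> simp⟩
  have hprod : (1 - x) * (1 + x) = 0 := by linear_combination -hx
  rcases isUnit_one_sub_or_isUnit_one_add h2 x with hu | hu
  · right; linear_combination hu.mul_right_eq_zero.mp hprod
  · left; linear_combination -(hu.mul_left_eq_zero.mp hprod)

theorem card_mul_eq_one_sub_sq_add_card_units (a : R) :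
    Nat.card {p : R × R // p.1 * p.2 = 1 - a ^ 2} + Nat.card Rˣ =
      Nat.card {p : R × R // p.1 * p.2 = 1 - a} + Nat.card {p : R × R // p.1 * p.2 = 1 + a} := by
  have hfactor : 1 - a ^ 2 = (1 - a) * (1 + a) := by ring
  rcases isUnit_one_sub_or_isUnit_one_add h2 a with ⟨u, hu⟩ | ⟨u, hu⟩
  · rw [hfactor, ← hu, card_mul_eq_units_mul, card_mul_eq_of_isUnit u.isUnit, add_comm]
  · rw [hfactor, ← hu, mul_comm, card_mul_eq_units_mul, card_mul_eq_of_isUnit u.isUnit]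

theorem card_sq_add_mul_eq_one [Finite R] :
    Nat.card {x : R × R × R // x.1 ^ 2 + x.2.1 * x.2.2 = 1} =
      Nat.card R * (Nat.card R + Nat.card (maximalIdeal R)) := by
  have := Fintype.ofFinite R
  let N : R → ℕ := fun t => Nat.card {p : R × R // p.1 * p.2 = t}
  have hsum : Nat.card {x : R × R × R // x.1 ^ 2 + x.2.1 * x.2.2 = 1} + Nat.card R * Nat.card Rˣ =
      2 * Nat.card R ^ 2 :=
    calc _ = ∑ a : R, (N (1 - a ^ 2) + Nat.card Rˣ) := by
          rw [Finset.sum_add_distrib, Finset.sum_const, Finset.card_univ,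
            ← Nat.card_eq_fintype_card, smul_eq_mul,
            Nat.card_congr (Equiv.subtypeProdEquivSigmaSubtype
              fun (a : R) (p : R × R) => a ^ 2 + p.1 * p.2 = 1), Nat.card_sigma]
          congr! 2 with a
          exact Nat.card_congr (Equiv.subtypeEquivRight fun p => by rw [eq_sub_iff_add_eq'])
      _ = ∑ a : R, N (1 - a) + ∑ a : R, N (1 + a) := by
          rw [← Finset.sum_add_distrib]
          exact Finset.sum_congr rfl fun a _ => card_mul_eq_one_sub_sq_add_card_units h2 a
      _ = 2 * Nat.card R ^ 2 := by
          rw [show ∑ a : R, N (1 - a) = ∑ t, N t from Equiv.sum_comp (Equiv.subLeft 1) N,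
            show ∑ a : R, N (1 + a) = ∑ t, N t from Equiv.sum_comp (Equiv.addLeft 1) N,
            sum_card_mul_eq, two_mul]
  have hcard := card_units_add_card_maximalIdeal (R := R)
  nlinarith

end LocalRing

section Matrix

variable {R : Type*} [CommRing R]

theorem Matrix.fin_two_sq_eq_one_iff (a b c d : R) :
    !![a, b; c, d] ^ 2 = 1 ↔
      a ^ 2 + b * c = 1 ∧ (a + d) * b = 0 ∧ (a + d) * c = 0 ∧ d ^ 2 + b * c = 1 := by
  rw [sq, mul_fin_two, one_fin_two, fin_two_eq_fin_two_iff]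
  ring_nf

theorem Matrix.fin_two_eq_one_iff (a b c d : R) :
    !![a, b; c, d] = 1 ↔ a = 1 ∧ b = 0 ∧ c = 0 ∧ d = 1 := by
  rw [one_fin_two, fin_two_eq_fin_two_iff]

theorem Matrix.fin_two_eq_neg_one_iff (a b c d : R) :
    !![a, b; c, d] = -1 ↔ a = -1 ∧ b = 0 ∧ c = 0 ∧ d = -1 := by
  rw [one_fin_two, ← Matrix.ext_iff]
  simp [Fin.forall_fin_two, and_assoc]

variable [IsLocalRing R] (h2 : IsUnit (2 : R))
include h2

theorem Matrix.fin_two_sq_eq_one_iff_of_isUnit_two (a b c d : R) :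
    !![a, b; c, d] ^ 2 = 1 ↔
      !![a, b; c, d] = 1 ∨ !![a, b; c, d] = -1 ∨ (d = -a ∧ a ^ 2 + b * c = 1) := by
  rw [fin_two_sq_eq_one_iff, fin_two_eq_one_iff, fin_two_eq_neg_one_iff]
  constructor
  · rintro ⟨ha, hb, hc, hd⟩
    by_cases ht : IsUnit (a + d)
    · obtain rfl := ht.mul_right_eq_zero.mp hb
      obtain rfl := ht.mul_right_eq_zero.mp hc
      obtain rfl : d = a := by
        have hsq : (a - d) * (a + d) = 0 := by linear_combination ha - hd
        linear_combination -ht.mul_left_eq_zero.mp hsq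
      rcases (sq_eq_one_iff_of_isUnit_two h2).mp (by simpa using ha) with rfl | rfl <;> simp
    · have hunit : IsUnit (2 - a * (a + d)) :=
        (isUnit_or_isUnit_of_isUnit_add (by rwa [sub_add_cancel])).resolve_right
          fun h => ht (isUnit_of_mul_isUnit_right h)
      -- with `t = a + d`: `t = t (a ^ 2 + b c) = a (t a)` as `t b = 0`,
      -- and `2 t a = t ^ 2` as `t a = t d`
      have htrace : (a + d) * (2 - a * (a + d)) = 0 := by
        linear_combination (-(a + d) - d) * ha + (-(a + d) + d) * hd + 2 * c * hb
      exact Or.inr (Or.inr ⟨by linear_combination hunit.mul_left_eq_zero.mp htrace, ha⟩)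
  · rintro (⟨rfl, rfl, rfl, rfl⟩ | ⟨rfl, rfl, rfl, rfl⟩ | ⟨rfl, h⟩)
    · norm_num
    · norm_num
    · exact ⟨h, by ring, by ring, by linear_combination h⟩

theorem Matrix.card_sq_eq_one_fin_two [Finite R] :
    Nat.card {A : Matrix (Fin 2) (Fin 2) R // A ^ 2 = 1} =
      Nat.card {x : R × R × R // x.1 ^ 2 + x.2.1 * x.2.2 = 1} + 2 := by
  let f : R × R × R → Matrix (Fin 2) (Fin 2) R := fun x => !![x.1, x.2.1; x.2.2, -x.1]
  have hf : f.Injective := fun x y hxy => by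
    obtain ⟨h₁, h₂, h₃, -⟩ := fin_two_eq_fin_two_iff.mp hxy
    exact Prod.ext h₁ (Prod.ext h₂ h₃)
  have hone : (1 : R) ≠ -1 := fun h =>
    not_isUnit_zero ((show (2 : R) = 0 by linear_combination h) ▸ h2)
  have himage (a b c d : R) :
      !![a, b; c, d] ∈ f '' {x | x.1 ^ 2 + x.2.1 * x.2.2 = 1} ↔ d = -a ∧ a ^ 2 + b * c = 1 := by
    constructor
    · rintro ⟨x, hx, he⟩
      obtain ⟨rfl, rfl, rfl, rfl⟩ := fin_two_eq_fin_two_iff.mp he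
      exact ⟨rfl, hx⟩
    · rintro ⟨rfl, h⟩
      exact ⟨(a, b, c), h, rfl⟩
  have hset : {A : Matrix (Fin 2) (Fin 2) R | A ^ 2 = 1} =
      f '' {x | x.1 ^ 2 + x.2.1 * x.2.2 = 1} ∪ {1, -1} := by
    ext A
    rw [eta_fin_two A, Set.mem_union, himage, Set.mem_ofPred_eq,
      fin_two_sq_eq_one_iff_of_isUnit_two h2, Set.mem_insert_iff, Set.mem_singleton_iff]
    tauto
  have hdisj : Disjoint (f '' {x | x.1 ^ 2 + x.2.1 * x.2.2 = 1}) {1, -1} := by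
    rw [Set.disjoint_right]
    rintro _ (rfl | rfl) h
    · rw [one_fin_two, himage] at h
      exact hone h.1
    · rw [show (-1 : Matrix (Fin 2) (Fin 2) R) = !![-1, 0; 0, -1] from
        ((fin_two_eq_neg_one_iff _ _ _ _).mpr ⟨rfl, rfl, rfl, rfl⟩).symm, himage] at h
      exact hone (by linear_combination -h.1)
  have hpair : (1 : Matrix (Fin 2) (Fin 2) R) ≠ -1 := fun h =>
    hone (by simpa using congrArg (· 0 0) h)
  rw [← Set.coe_ofPred, Nat.card_coe_set_eq, hset, Set.ncard_union_eq hdisj,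
    Set.ncard_image_of_injective _ hf, Set.ncard_pair hpair, ← Nat.card_coe_set_eq]
  rfl

end Matrix

theorem Matrix.GeneralLinearGroup.card_sq_eq_one_fin_two {R : Type*} [CommRing R] [IsLocalRing R]
    [Finite R] (h2 : IsUnit (2 : R)) :
    Nat.card {g : GL (Fin 2) R // g ^ 2 = 1} =
      Nat.card R * (Nat.card R + Nat.card (maximalIdeal R)) + 2 := by
  rw [Nat.card_congr (Units.subtypePowEqOneEquiv two_ne_zero), Matrix.card_sq_eq_one_fin_two h2,
    card_sq_add_mul_eq_one h2]

section Quotient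

variable {R : Type*} [CommRing R] [IsLocalRing R] (n : ℕ)

instance IsLocalRing.quotient_maximalIdeal_pow_succ : IsLocalRing (R ⧸ maximalIdeal R ^ (n + 1)) :=
  have : Nontrivial (R ⧸ maximalIdeal R ^ (n + 1)) := Ideal.Quotient.nontrivial_iff.mpr
    (ne_top_of_le_ne_top (maximalIdeal.isMaximal R).ne_top (Ideal.pow_le_self n.succ_ne_zero))
  .of_surjective' _ Ideal.Quotient.mk_surjective

theorem IsLocalRing.card_quotient_maximalIdeal_pow_succ :
    Nat.card (R ⧸ maximalIdeal R ^ (n + 1)) =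
      Nat.card (maximalIdeal (R ⧸ maximalIdeal R ^ (n + 1))) * Nat.card (ResidueField R) := by
  rw [Submodule.card_eq_card_quotient_mul_card (maximalIdeal (R ⧸ maximalIdeal R ^ (n + 1))),
    ← map_maximalIdeal_of_surjective _ Ideal.Quotient.mk_surjective]
  congr 1
  exact Nat.card_congr (DoubleQuot.quotQuotEquivQuotOfLE (Ideal.pow_le_self n.succ_ne_zero)).toEquiv

end Quotient

section DVR

variable {O : Type*} [CommRing O] [IsDomain O] [IsDiscreteValuationRing O]

theorem IsDiscreteValuationRing.card_quotient_maximalIdeal_pow (n : ℕ) :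
    Nat.card (O ⧸ IsLocalRing.maximalIdeal O ^ n) = Nat.card (ResidueField O) ^ n := by
  have h := cardQuot_pow_of_prime (P := IsLocalRing.maximalIdeal O) (not_a_field O) (i := n)
  rwa [Submodule.cardQuot_apply, Submodule.cardQuot_apply] at h

end DVR

theorem IsLocalRing.isUnit_two_of_ringChar_ne_two {R : Type*} [CommRing R] [IsLocalRing R]
    (h : ringChar (ResidueField R) ≠ 2) : IsUnit (2 : R) :=
  (residue_ne_zero_iff_isUnit 2).mp (by rw [map_ofNat]; exact Ring.two_ne_zero h)

theorem count_involutions_GL2_general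
    (O : Type) [CommRing O] [IsDomain O] [IsDiscreteValuationRing O]
    (π : O) (hπ : IsLocalRing.maximalIdeal O = Ideal.span {π})
    [Finite (IsLocalRing.ResidueField O)]
    (hodd : Odd (ringChar (IsLocalRing.ResidueField O)))
    (q : ℕ) (hq : Nat.card (IsLocalRing.ResidueField O) = q)
    (ℓ : ℕ) (hℓ : 1 ≤ ℓ) :
    Nat.card {g : GL (Fin 2) (O ⧸ Ideal.span {π} ^ ℓ) // g ^ 2 = 1} =
      (q + 1) * q ^ (2 * ℓ - 1) + 2 := by
  obtain ⟨m, rfl⟩ : ∃ m, ℓ = m + 1 := ⟨ℓ - 1, by omega⟩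
  rw [← hπ]
  have hq0 : 0 < q := hq ▸ Nat.card_pos
  have hcard := IsDiscreteValuationRing.card_quotient_maximalIdeal_pow (O := O) (m + 1)
  have : Finite (O ⧸ maximalIdeal O ^ (m + 1)) :=
    Nat.finite_of_card_ne_zero (by rw [hcard, hq]; positivity)
  have hmax : Nat.card (maximalIdeal (O ⧸ maximalIdeal O ^ (m + 1))) = q ^ m := by
    have h := card_quotient_maximalIdeal_pow_succ (R := O) m
    rw [hcard, hq, pow_succ] at h
    exact (Nat.eq_of_mul_eq_mul_right hq0 h).symm
  have h2 : IsUnit (2 : O ⧸ maximalIdeal O ^ (m + 1)) := by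
    rw [← map_ofNat (Ideal.Quotient.mk (maximalIdeal O ^ (m + 1))) 2]
    exact (isUnit_two_of_ringChar_ne_two fun h => absurd (h ▸ hodd) (by decide)).map _
  rw [GeneralLinearGroup.card_sq_eq_one_fin_two h2, hmax, hcard, hq,
    show 2 * (m + 1) - 1 = 2 * m + 1 by omega]
  ring

theorem count_involutions_GL2
    (O : Type) [CommRing O] [IsDomain O] [IsDiscreteValuationRing O]
    [IsAdicComplete (IsLocalRing.maximalIdeal O) O]
    (π : O) (hπ : IsLocalRing.maximalIdeal O = Ideal.span {π})
    [Finite (IsLocalRing.ResidueField O)]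
    (hodd : Odd (ringChar (IsLocalRing.ResidueField O)))
    (q : ℕ) (hq : Nat.card (IsLocalRing.ResidueField O) = q)
    (ℓ : ℕ) (hℓ : 1 ≤ ℓ) :
    Nat.card {g : GL (Fin 2) (O ⧸ Ideal.span {π} ^ ℓ) // g ^ 2 = 1} =
      (q + 1) * q ^ (2 * ℓ - 1) + 2 :=
  count_involutions_GL2_general O π hπ hodd q hq ℓ hℓ
end
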